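/- Let T be a rooted phylogenetic X-tree and let L ⊆ (X choose 2) be a set of cords with ∪L = X. Then L is a topological lasso for T if and only if for every interior vertex v of T, the child-edge graph G(L, v) is a clique. -/

import Mathlib

open scoped Classical

/-- A rooted `X`-tree on vertex type `V`: a finite rooted tree encoded by a parent
function, whose leaves (the vertices with no children) are bijectively labelled by `X`. -/
structure XTree (X V : Type) where
  root : V
  parent : V → V
  parent_root : parent root = root
  reaches : ∀ v : V, ∃ n : ℕ, parent^[n] v = root
  leaf : X → V
  leaf_inj : Function.Injective leaf
  leaf_iff : ∀ v : V, (∀ w : V, parent w = v → w = v) ↔ v ∈ Set.range leaf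

namespace XTree

variable {X V : Type}

/-- The children of a vertex. -/
def children (T : XTree X V) (v : V) : Set V := {w | T.parent w = v ∧ w ≠ v}

def IsLeaf (T : XTree X V) (v : V) : Prop := v ∈ Set.range T.leaf

def Interior (T : XTree X V) (v : V) : Prop := ¬ T.IsLeaf v

/-- Phylogenetic: root has at least two children, and no non-root vertex has exactly
one child (no degree-two vertices apart from possibly the root). -/
def IsPhylo (T : XTree X V) : Prop :=
  2 ≤ (T.children T.root).ncard ∧
    ∀ v : V, v ≠ T.root → T.Interior v → 2 ≤ (T.children v).ncard

/-- `T.Desc v w` : `w` is a descendant of `v` (or equal to `v`). -/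
def Desc (T : XTree X V) (v w : V) : Prop := ∃ n : ℕ, T.parent^[n] w = v

/-- The set of leaf labels below a vertex. -/
def leafSet (T : XTree X V) (v : V) : Set X := {x | T.Desc v (T.leaf x)}

/-- `v` is the last common ancestor of the set `S` of vertices. -/
def IsLCA (T : XTree X V) (v : V) (S : Set V) : Prop :=
  (∀ w ∈ S, T.Desc v w) ∧ ∀ u : V, (∀ w ∈ S, T.Desc u w) → T.Desc u v

/-- Not a star tree: some interior vertex other than the root. -/
def NonDegenerate (T : XTree X V) : Prop := ∃ v : V, T.Interior v ∧ v ≠ T.root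

end XTree

/-- A cord: a 2-element subset of `X`. -/
def IsCord {X : Type} (c : Set X) : Prop := ∃ a b : X, a ≠ b ∧ c = {a, b}

/-- The graph `Γ(L)` with vertex set `X` and edge set `L`. -/
def cordGraph {X : Type} (L : Set (Set X)) : SimpleGraph X where
  Adj a b := a ≠ b ∧ ({a, b} : Set X) ∈ L
  symm := by
    constructor
    intro a b h
    exact ⟨Ne.symm h.1, by rw [Set.pair_comm]; exact h.2⟩
  loopless := by constructor; intro a h; exact h.1 rfl

/-- Topological lasso, via the child-edge graph characterization: for every interior
vertex, any two distinct child subtrees are joined by a cord of `L`. -/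
def XTree.IsTopoLasso {X V : Type} (T : XTree X V) (L : Set (Set X)) : Prop :=
  ∀ v c₁ c₂ : V, c₁ ∈ T.children v → c₂ ∈ T.children v → c₁ ≠ c₂ →
    ∃ a b : X, a ∈ T.leafSet c₁ ∧ b ∈ T.leafSet c₂ ∧ ({a, b} : Set X) ∈ L

/-- Set-inclusion minimal topological lasso. -/
def XTree.IsMinTopoLasso {X V : Type} (T : XTree X V) (L : Set (Set X)) : Prop :=
  T.IsTopoLasso L ∧ ∀ L' ⊆ L, T.IsTopoLasso L' → L' = L

/-- A nonempty vertex set inducing a connected subgraph with no cut vertex. -/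
def GoodSet {α : Type} (G : SimpleGraph α) (B : Set α) : Prop :=
  B.Nonempty ∧ (G.induce B).Connected ∧
    ∀ v ∈ B, (B \ {v}).Nonempty → (G.induce (B \ {v})).Connected

/-- A block: a maximal connected induced subgraph without a cut vertex. -/
def IsBlock {α : Type} (G : SimpleGraph α) (B : Set α) : Prop :=
  GoodSet G B ∧ ∀ C : Set α, GoodSet G C → B ⊆ C → B = C

/-- A block graph: every block is a clique. -/
def IsBlockGraph {α : Type} (G : SimpleGraph α) : Prop :=
  ∀ B : Set α, IsBlock G B → G.IsClique B

/-- A cut vertex: deleting it disconnects the graph. -/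
def IsCutVtx {α : Type} (G : SimpleGraph α) (v : α) : Prop :=
  ¬ (G.induce {w | w ≠ v}).Connected

/-- Claw-free: no induced `K_{1,3}`. -/
def ClawFree {α : Type} (G : SimpleGraph α) : Prop :=
  ¬ ∃ v a b c : α, a ≠ b ∧ a ≠ c ∧ b ≠ c ∧
    G.Adj v a ∧ G.Adj v b ∧ G.Adj v c ∧ ¬ G.Adj a b ∧ ¬ G.Adj a c ∧ ¬ G.Adj b c

/-- The child-edge graph `G(L,v)`: vertices are the children of `v` (equivalently
the child edges of `v`), two of them adjacent if a cord of `L` joins their subtrees. -/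
def childGraph {X V : Type} (T : XTree X V) (L : Set (Set X)) (v : V) :
    SimpleGraph {c : V // c ∈ T.children v} where
  Adj c₁ c₂ := c₁ ≠ c₂ ∧ ∃ a b : X,
    a ∈ T.leafSet (c₁ : V) ∧ b ∈ T.leafSet (c₂ : V) ∧ ({a, b} : Set X) ∈ L
  symm := by
    constructor
    rintro c₁ c₂ ⟨h, a, b, ha, hb, hm⟩
    exact ⟨Ne.symm h, b, a, hb, ha, by rw [Set.pair_comm]; exact hm⟩
  loopless := by constructor; rintro c ⟨h, -⟩; exact h rfl

/-- `cl(T)`: the clusters of non-root interior vertices. -/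
def clSet {X V : Type} (T : XTree X V) : Set (Set X) :=
  {A | ∃ v : V, v ≠ T.root ∧ T.Interior v ∧ A = T.leafSet v}

/-- A cluster marker map for `T` and the ordering of `X`:
`f A` is the `σ`-least element of `A` not used as marker of a proper subcluster. -/
def IsClusterMarker {X V : Type} [LinearOrder X] (T : XTree X V) (f : Set X → X) : Prop :=
  ∀ A ∈ clSet T,
    ((∃ B ∈ clSet T, B ⊂ A) →
      IsLeast (A \ {y | ∃ B ∈ clSet T, B ⊂ A ∧ f B = y}) (f A)) ∧
    ((¬ ∃ B ∈ clSet T, B ⊂ A) → IsLeast A (f A))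

/-- The marker of a child `c` of an interior vertex: the label of `c` if `c` is a leaf,
and `f (L(c))` if `c` is interior. -/
def markRel {X V : Type} (T : XTree X V) (f : Set X → X) (c : V) (a : X) : Prop :=
  T.leaf a = c ∨ (T.Interior c ∧ a = f (T.leafSet c))

/-- `L_{(T,f)}(v)`: all cords between markers of distinct children of `v`. -/
def lassoAt {X V : Type} (T : XTree X V) (f : Set X → X) (v : V) : Set (Set X) :=
  {c | ∃ c₁ c₂ : V, c₁ ∈ T.children v ∧ c₂ ∈ T.children v ∧ c₁ ≠ c₂ ∧
    ∃ a b : X, markRel T f c₁ a ∧ markRel T f c₂ b ∧ c = {a, b}}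

/-- `L_{(T,f)}`: the union over all interior vertices of `L_{(T,f)}(v)`. -/
def lassoFull {X V : Type} (T : XTree X V) (f : Set X → X) : Set (Set X) :=
  {c | ∃ v : V, T.Interior v ∧ c ∈ lassoAt T f v}

/-- An equidistant proper edge-weighting of `T`, encoded by the height function
`t v` = distance from `v` to any leaf below it (so all leaves are equidistant
from the root); properness: interior edges have positive weight. -/
def EquidistantProper {X V : Type} (T : XTree X V) (t : V → ℝ) : Prop :=
  (∀ x : X, t (T.leaf x) = 0) ∧ (∀ v : V, t v ≤ t (T.parent v)) ∧
    ∀ v : V, v ≠ T.root → T.Interior v → t v < t (T.parent v)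

/-- Equivalence of two `X`-trees: a root-, parent- and labelling-preserving bijection. -/
def TreeEquiv {X V V' : Type} (T : XTree X V) (T' : XTree X V') : Prop :=
  ∃ φ : V ≃ V', φ T.root = T'.root ∧ (∀ v, φ (T.parent v) = T'.parent (φ v)) ∧
    ∀ x, φ (T.leaf x) = T'.leaf x

/-- `S` is (equivalent to) the restriction `T|_Y`: the clusters of `S` are exactly the
nonempty traces on `Y` of the clusters of `T`. -/
def IsRestriction {X : Type} (Y : Set X) {V W : Type}
    (T : XTree X V) (S : XTree (↥Y) W) : Prop :=
  ∀ A : Set X, A ⊆ Y →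
    ((∃ w : W, A = Subtype.val '' S.leafSet w) ↔ (A.Nonempty ∧ ∃ v : V, A = T.leafSet v ∩ Y))

/-- The restriction `L|_Y` of a set of cords of `X` to cords of `Y`. -/
def restrictLasso {X : Type} (Y : Set X) (L : Set (Set X)) : Set (Set ↥Y) :=
  {c | ∃ a b : ↥Y, a ≠ b ∧ c = {a, b} ∧ ({(a : X), (b : X)} : Set X) ∈ L}

/-!
If every child-edge graph is a clique, agreement of the lca-heights on the cords propagates, by
induction up the tree, to all pairs of leaves: a pair separated at `v` lies within height `< t v`
of a cord separated at `v`, and the ultrametric inequality forces the pair to have height `t v` in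
the other tree too. The heights determine the clusters as closed balls, and the clusters
determine the tree.

Conversely, let two children `c₁, c₂` of `v` be joined by no cord. If `v` has a third child,
insert a new vertex above `c₁, c₂`; otherwise contract the edge above `v`, or, when `v` is the
root, the edge above whichever of `c₁, c₂` is interior (one is, since `|X| ≥ 3`). No cord is
separated at the vertex that moves, so all cords keep their heights, while the new tree has a
different number of vertices.
-/

theorem exists_iterate_map {α β : Type*} {P : α → α} {Q : β → β} (f : α → β)
    (hf : ∀ a, ∃ n, Q^[n] (f a) = f (P a)) {a b : α} (h : ∃ n, P^[n] a = b) :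
    ∃ m, Q^[m] (f a) = f b := by
  obtain ⟨n, rfl⟩ := h
  induction n with
  | zero => exact ⟨0, rfl⟩
  | succ n ih =>
    obtain ⟨m, hm⟩ := ih
    obtain ⟨k, hk⟩ := hf (P^[n] a)
    exact ⟨k + m, by rw [Function.iterate_add_apply, hm, hk, Function.iterate_succ_apply']⟩

theorem ultrametric_eq_of_lt {α : Type*} {d : α → α → ℝ} (hsymm : ∀ x y, d x y = d y x)
    (hultra : ∀ x y z, d x z ≤ max (d x y) (d y z)) {x y z : α} (h : d y z < d x z) :
    d x y = d x z := by
  have hle : d x y ≤ d x z := (hultra x z y).trans (max_le le_rfl (hsymm z y ▸ h.le))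
  by_contra hne
  exact absurd (hultra x y z) (not_le.mpr (max_lt (lt_of_le_of_ne hle hne) h))

theorem ultrametric_eq_of_near {α : Type*} {d : α → α → ℝ} (hsymm : ∀ x y, d x y = d y x)
    (hultra : ∀ x y z, d x z ≤ max (d x y) (d y z)) {a a₀ b b₀ : α}
    (ha : a = a₀ ∨ d a a₀ < d a₀ b₀) (hb : b = b₀ ∨ d b b₀ < d a₀ b₀) :
    d a b = d a₀ b₀ := by
  have hb' : d a₀ b = d a₀ b₀ := by
    rcases hb with rfl | hb
    · rfl
    · exact ultrametric_eq_of_lt hsymm hultra hb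
  rcases ha with rfl | ha
  · exact hb'
  · rw [hsymm, ultrametric_eq_of_lt hsymm hultra (by rwa [hsymm b, hb']), hsymm, hb']

namespace XTree

variable {X V V' : Type} {T : XTree X V} {T' : XTree X V'} {t : V → ℝ} {t' : V' → ℝ}
  {L : Set (Set X)}

section Descent

variable (T) in
theorem desc_refl (v : V) : T.Desc v v := ⟨0, rfl⟩

theorem desc_trans {u v w : V} (huv : T.Desc u v) (hvw : T.Desc v w) : T.Desc u w := by
  obtain ⟨n, hn⟩ := huv
  obtain ⟨m, hm⟩ := hvw
  exact ⟨n + m, by rw [Function.iterate_add_apply, hm, hn]⟩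

variable (T) in
theorem desc_parent (v : V) : T.Desc (T.parent v) v := ⟨1, rfl⟩

variable (T) in
theorem desc_root (v : V) : T.Desc T.root v := T.reaches v

theorem eq_root_of_iterate_eq {v : V} {n : ℕ} (hn : 0 < n) (h : T.parent^[n] v = v) :
    v = T.root := by
  obtain ⟨N, hN⟩ := T.reaches v
  have hper : Function.IsPeriodicPt T.parent (n * N) v :=
    Function.IsPeriodicPt.mul_const h N
  calc v = T.parent^[n * N - N] (T.parent^[N] v) := by
        rw [← Function.iterate_add_apply, Nat.sub_add_cancel (Nat.le_mul_of_pos_left N hn)]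
        exact hper.eq.symm
    _ = T.root := by rw [hN, Function.iterate_fixed T.parent_root]

theorem parent_ne_self {v : V} (hv : v ≠ T.root) : T.parent v ≠ v :=
  fun h => hv (eq_root_of_iterate_eq one_pos h)

theorem eq_root_of_desc {v : V} (h : T.Desc v T.root) : v = T.root := by
  obtain ⟨n, hn⟩ := h
  rw [← hn, Function.iterate_fixed T.parent_root]

theorem desc_antisymm {u v : V} (huv : T.Desc u v) (hvu : T.Desc v u) : u = v := by
  obtain ⟨n, rfl⟩ := huv
  obtain ⟨m, hm⟩ := hvu
  rcases Nat.eq_zero_or_pos (m + n) with h0 | hpos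
  · obtain rfl : n = 0 := by omega
    rfl
  · have hv : v = T.root :=
      eq_root_of_iterate_eq hpos (by rw [Function.iterate_add_apply, hm])
    subst hv
    exact Function.iterate_fixed T.parent_root n

theorem desc_total {u w x : V} (hux : T.Desc u x) (hwx : T.Desc w x) :
    T.Desc u w ∨ T.Desc w u := by
  obtain ⟨n, rfl⟩ := hux
  obtain ⟨m, rfl⟩ := hwx
  rcases le_total n m with h | h
  · exact Or.inr ⟨m - n, by rw [← Function.iterate_add_apply, Nat.sub_add_cancel h]⟩
  · exact Or.inl ⟨n - m, by rw [← Function.iterate_add_apply, Nat.sub_add_cancel h]⟩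

theorem desc_parent_of_ne {u v : V} (h : T.Desc u v) (hne : u ≠ v) : T.Desc u (T.parent v) := by
  obtain ⟨_ | n, hn⟩ := h
  · exact absurd hn.symm hne
  · exact ⟨n, hn⟩

theorem Desc.map (f : V → V') (hf : ∀ v, T'.Desc (f (T.parent v)) (f v)) {u w : V}
    (h : T.Desc u w) : T'.Desc (f u) (f w) :=
  exists_iterate_map f hf h

end Descent

section Children

theorem mem_children_parent {v : V} (hv : v ≠ T.root) : v ∈ T.children (T.parent v) :=
  ⟨rfl, (parent_ne_self hv).symm⟩

theorem desc_of_mem_children {v c : V} (hc : c ∈ T.children v) : T.Desc v c :=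
  hc.1 ▸ T.desc_parent c

theorem ne_root_of_mem_children {v c : V} (hc : c ∈ T.children v) : c ≠ T.root := by
  rintro rfl
  exact hc.2 (T.parent_root.symm.trans hc.1)

theorem not_desc_of_mem_children {v c : V} (hc : c ∈ T.children v) : ¬ T.Desc c v :=
  fun h => hc.2 (desc_antisymm h (desc_of_mem_children hc))

theorem not_desc_of_mem_children_of_ne {v c₁ c₂ w : V} (hc₁ : c₁ ∈ T.children v)
    (hc₂ : c₂ ∈ T.children v) (hne : c₁ ≠ c₂) (h₁ : T.Desc c₁ w) : ¬ T.Desc c₂ w := by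
  intro h₂
  rcases desc_total h₁ h₂ with h | h
  · exact not_desc_of_mem_children hc₁ (hc₂.1 ▸ desc_parent_of_ne h hne)
  · exact not_desc_of_mem_children hc₂ (hc₁.1 ▸ desc_parent_of_ne h hne.symm)

theorem exists_mem_children_desc {v w : V} (h : T.Desc v w) (hne : w ≠ v) :
    ∃ c ∈ T.children v, T.Desc c w := by
  obtain ⟨n, hn⟩ := h
  induction n generalizing w with
  | zero => exact absurd hn hne
  | succ n ih =>
    by_cases hp : T.parent w = v
    · exact ⟨w, ⟨hp, hne⟩, T.desc_refl w⟩
    · obtain ⟨c, hc, hcw⟩ := ih hp (by rwa [Function.iterate_succ_apply] at hn)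
      exact ⟨c, hc, desc_trans hcw (T.desc_parent w)⟩

variable (T) in
theorem children_induction [Finite V] {P : V → Prop}
    (h : ∀ v, (∀ c ∈ T.children v, P c) → P v) (v : V) : P v := by
  let below : V → V → Prop := fun w v => T.Desc v w ∧ w ≠ v
  have : IsTrans V below := ⟨fun a b c hab hbc =>
    ⟨desc_trans hbc.1 hab.1, fun hac => hab.2 (desc_antisymm hab.1 (hac ▸ hbc.1)).symm⟩⟩
  have : Std.Irrefl below := ⟨fun a h => h.2 rfl⟩
  exact (Finite.wellFounded_of_trans_of_irrefl below).induction v fun v ih =>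
    h v fun c hc => ih c ⟨desc_of_mem_children hc, hc.2⟩

end Children

section Leaves

theorem interior_iff_exists_mem_children {v : V} : T.Interior v ↔ ∃ c, c ∈ T.children v := by
  rw [Interior, IsLeaf, ← T.leaf_iff]
  simp only [not_forall, exists_prop]
  rfl

theorem eq_of_isLeaf_of_desc {v w : V} (hv : T.IsLeaf v) (h : T.Desc v w) : w = v := by
  obtain ⟨n, hn⟩ := h
  induction n generalizing w with
  | zero => exact hn
  | succ n ih => exact (T.leaf_iff v).mpr hv w (ih hn)

theorem leafSet_mono {u v : V} (h : T.Desc u v) : T.leafSet v ⊆ T.leafSet u :=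
  fun _ hx => desc_trans h hx

variable (T) in
theorem leafSet_leaf (x : X) : T.leafSet (T.leaf x) = {x} := by
  ext y
  exact ⟨fun h => T.leaf_inj (eq_of_isLeaf_of_desc ⟨x, rfl⟩ h), fun h => h ▸ T.desc_refl _⟩

variable (T) in
theorem leafSet_nonempty [Finite V] (v : V) : (T.leafSet v).Nonempty := by
  induction v using T.children_induction with
  | h v ih =>
    by_cases hv : T.IsLeaf v
    · obtain ⟨x, rfl⟩ := hv
      exact ⟨x, T.desc_refl _⟩
    · obtain ⟨c, hc⟩ := interior_iff_exists_mem_children.mp hv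
      exact (ih c hc).mono (leafSet_mono (desc_of_mem_children hc))

theorem interior_of_mem_leafSet {v : V} {a b : X} (hab : a ≠ b) (ha : a ∈ T.leafSet v)
    (hb : b ∈ T.leafSet v) : T.Interior v := fun hv =>
  hab (T.leaf_inj ((eq_of_isLeaf_of_desc hv ha).trans (eq_of_isLeaf_of_desc hv hb).symm))

end Leaves

section Phylo

theorem IsPhylo.two_le_ncard_children (hph : T.IsPhylo) {v : V} (hv : T.Interior v) :
    2 ≤ (T.children v).ncard := by
  by_cases h : v = T.root
  · exact h ▸ hph.1
  · exact hph.2 v h hv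

theorem IsPhylo.exists_two_children [Finite V] (hph : T.IsPhylo) {v : V} (hv : T.Interior v) :
    ∃ c₁ ∈ T.children v, ∃ c₂ ∈ T.children v, c₁ ≠ c₂ := by
  obtain ⟨c₁, c₂, h₁, h₂, hne⟩ :=
    (Set.one_lt_ncard_iff (Set.toFinite _)).mp (hph.two_le_ncard_children hv)
  exact ⟨c₁, h₁, c₂, h₂, hne⟩

theorem IsPhylo.interior_root (hph : T.IsPhylo) : T.Interior T.root :=
  interior_iff_exists_mem_children.mpr (Set.nonempty_of_ncard_ne_zero (by have := hph.1; omega))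

theorem IsPhylo.leafSet_ssubset_parent [Finite V] (hph : T.IsPhylo) {v : V} (hv : v ≠ T.root) :
    T.leafSet v ⊂ T.leafSet (T.parent v) := by
  have hvc := mem_children_parent hv
  obtain ⟨c₁, h₁, c₂, h₂, hne⟩ :=
    hph.exists_two_children (interior_iff_exists_mem_children.mpr ⟨v, hvc⟩)
  obtain ⟨c, hc, hcv⟩ : ∃ c ∈ T.children (T.parent v), c ≠ v := by
    by_cases h : c₁ = v
    · exact ⟨c₂, h₂, fun h' => hne (h.trans h'.symm)⟩
    · exact ⟨c₁, h₁, h⟩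
  obtain ⟨x, hx⟩ := T.leafSet_nonempty c
  refine ⟨leafSet_mono (T.desc_parent v), fun hsub => ?_⟩
  exact not_desc_of_mem_children_of_ne hc hvc hcv hx
    (hsub (leafSet_mono (desc_of_mem_children hc) hx))

theorem IsPhylo.desc_iff_leafSet_subset [Finite V] (hph : T.IsPhylo) {u w : V} :
    T.Desc w u ↔ T.leafSet u ⊆ T.leafSet w := by
  refine ⟨leafSet_mono, fun hsub => ?_⟩
  obtain ⟨x, hx⟩ := T.leafSet_nonempty u
  rcases desc_total (hsub hx) hx with h | h
  · exact h
  by_cases hwu : w = u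
  · exact hwu ▸ T.desc_refl w
  have hw : w ≠ T.root := by
    rintro rfl
    exact hwu (eq_root_of_desc h).symm
  exact absurd ((leafSet_mono (desc_parent_of_ne h (Ne.symm hwu))).trans hsub)
    (hph.leafSet_ssubset_parent hw).2

theorem IsPhylo.leafSet_injective [Finite V] (hph : T.IsPhylo) : Function.Injective T.leafSet :=
  fun _ _ h => desc_antisymm (hph.desc_iff_leafSet_subset.mpr h.ge)
    (hph.desc_iff_leafSet_subset.mpr h.le)

theorem two_le_ncard_children_of_mem [Finite V] {v c₁ c₂ : V} (h₁ : c₁ ∈ T.children v)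
    (h₂ : c₂ ∈ T.children v) (hne : c₁ ≠ c₂) : 2 ≤ (T.children v).ncard :=
  (Set.one_lt_ncard_iff (Set.toFinite _)).mpr ⟨c₁, c₂, h₁, h₂, hne⟩

end Phylo

section LCA

variable (T) in
theorem exists_isLCA (u w : V) : ∃ v, T.IsLCA v {u, w} := by
  have hex : ∃ n, T.Desc (T.parent^[n] u) w := by
    obtain ⟨N, hN⟩ := T.reaches u
    exact ⟨N, hN ▸ T.desc_root w⟩
  refine ⟨T.parent^[Nat.find hex] u, ?_, fun z hz => ?_⟩
  · rintro z (rfl | rfl)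
    · exact ⟨_, rfl⟩
    · exact Nat.find_spec hex
  · obtain ⟨m, hm⟩ := hz u (Or.inl rfl)
    have hle : Nat.find hex ≤ m := Nat.find_le (hm ▸ hz w (Or.inr rfl))
    exact ⟨m - Nat.find hex, by rw [← Function.iterate_add_apply, Nat.sub_add_cancel hle, hm]⟩

theorem IsLCA.unique {v w : V} {S : Set V} (hv : T.IsLCA v S) (hw : T.IsLCA w S) : v = w :=
  desc_antisymm (hw.2 v hv.1) (hv.2 w hw.1)

noncomputable def lca (T : XTree X V) (u w : V) : V := (T.exists_isLCA u w).choose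

theorem isLCA_lca (u w : V) : T.IsLCA (T.lca u w) {u, w} := (T.exists_isLCA u w).choose_spec

theorem IsLCA.lca_eq {u w v : V} (h : T.IsLCA v {u, w}) : T.lca u w = v :=
  (isLCA_lca u w).unique h

theorem lca_comm (u w : V) : T.lca u w = T.lca w u :=
  IsLCA.lca_eq (by rw [Set.pair_comm]; exact isLCA_lca w u)

theorem lca_self (u : V) : T.lca u u = u :=
  IsLCA.lca_eq ⟨by rintro z (rfl | rfl) <;> exact T.desc_refl z, fun _ hz => hz u (Or.inl rfl)⟩

variable (T) in
theorem desc_lca_left (u w : V) : T.Desc (T.lca u w) u := (isLCA_lca u w).1 u (Or.inl rfl)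

variable (T) in
theorem desc_lca_right (u w : V) : T.Desc (T.lca u w) w := (isLCA_lca u w).1 w (Or.inr rfl)

theorem desc_lca {z u w : V} (hu : T.Desc z u) (hw : T.Desc z w) : T.Desc z (T.lca u w) :=
  (isLCA_lca u w).2 z (by rintro y (rfl | rfl); exacts [hu, hw])

theorem isLCA_of_mem_children {v c₁ c₂ u w : V} (hc₁ : c₁ ∈ T.children v)
    (hc₂ : c₂ ∈ T.children v) (hne : c₁ ≠ c₂) (hu : T.Desc c₁ u) (hw : T.Desc c₂ w) :
    T.IsLCA v {u, w} := by
  have hvu := desc_trans (desc_of_mem_children hc₁) hu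
  have hvw := desc_trans (desc_of_mem_children hc₂) hw
  refine ⟨by rintro z (rfl | rfl); exacts [hvu, hvw], fun z hz => ?_⟩
  rcases desc_total hvu (hz u (Or.inl rfl)) with hvz | hzv
  · by_cases hzv : z = v
    · exact hzv ▸ T.desc_refl v
    obtain ⟨c, hc, hcz⟩ := exists_mem_children_desc hvz hzv
    have hcw := desc_trans hcz (hz w (Or.inr rfl))
    obtain rfl : c = c₁ := by
      by_contra h
      exact not_desc_of_mem_children_of_ne hc hc₁ h (desc_trans hcz (hz u (Or.inl rfl))) hu
    exact absurd hw (not_desc_of_mem_children_of_ne hc hc₂ hne hcw)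
  · exact hzv

theorem ne_of_mem_leafSet_children {v c₁ c₂ : V} (hc₁ : c₁ ∈ T.children v)
    (hc₂ : c₂ ∈ T.children v) (hne : c₁ ≠ c₂) {a b : X} (ha : a ∈ T.leafSet c₁)
    (hb : b ∈ T.leafSet c₂) : a ≠ b := by
  rintro rfl
  exact not_desc_of_mem_children_of_ne hc₁ hc₂ hne ha hb

theorem exists_mem_children_of_isLCA {v : V} {a b : X} (hab : a ≠ b)
    (h : T.IsLCA v {T.leaf a, T.leaf b}) :
    ∃ c₁ ∈ T.children v, ∃ c₂ ∈ T.children v,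
      c₁ ≠ c₂ ∧ a ∈ T.leafSet c₁ ∧ b ∈ T.leafSet c₂ := by
  have ha : a ∈ T.leafSet v := h.1 _ (Or.inl rfl)
  have hb : b ∈ T.leafSet v := h.1 _ (Or.inr rfl)
  have hint := interior_of_mem_leafSet hab ha hb
  obtain ⟨c₁, hc₁, ha₁⟩ := exists_mem_children_desc ha fun h => hint ⟨a, h⟩
  obtain ⟨c₂, hc₂, hb₂⟩ := exists_mem_children_desc hb fun h => hint ⟨b, h⟩
  refine ⟨c₁, hc₁, c₂, hc₂, ?_, ha₁, hb₂⟩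
  rintro rfl
  exact not_desc_of_mem_children hc₁ (h.2 c₁ (by rintro z (rfl | rfl); exacts [ha₁, hb₂]))

end LCA

section Heights

theorem _root_.EquidistantProper.mono (ht : EquidistantProper T t) {u v : V}
    (h : T.Desc u v) : t v ≤ t u := by
  obtain ⟨n, rfl⟩ := h
  induction n with
  | zero => exact le_rfl
  | succ n ih => exact ih.trans (by rw [Function.iterate_succ_apply']; exact ht.2.1 _)

theorem _root_.EquidistantProper.lt_of_mem_children (ht : EquidistantProper T t) {v c : V}
    (hc : c ∈ T.children v) (hint : T.Interior c) : t c < t v :=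
  hc.1 ▸ ht.2.2 c (ne_root_of_mem_children hc) hint

noncomputable def lcaHeight (T : XTree X V) (t : V → ℝ) (a b : X) : ℝ :=
  t (T.lca (T.leaf a) (T.leaf b))

theorem lcaHeight_comm (a b : X) : T.lcaHeight t a b = T.lcaHeight t b a := by
  rw [lcaHeight, lcaHeight, lca_comm]

theorem lcaHeight_self (ht : EquidistantProper T t) (a : X) : T.lcaHeight t a a = 0 := by
  rw [lcaHeight, lca_self]
  exact ht.1 a

theorem lcaHeight_le_max (ht : EquidistantProper T t) (a b c : X) :
    T.lcaHeight t a c ≤ max (T.lcaHeight t a b) (T.lcaHeight t b c) := by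
  rcases desc_total (T.desc_lca_right (T.leaf a) (T.leaf b))
    (T.desc_lca_left (T.leaf b) (T.leaf c)) with h | h
  · exact (ht.mono (desc_lca (T.desc_lca_left _ _) (desc_trans h (T.desc_lca_right _ _)))).trans
      (le_max_left _ _)
  · exact (ht.mono (desc_lca (desc_trans h (T.desc_lca_left _ _)) (T.desc_lca_right _ _))).trans
      (le_max_right _ _)

theorem lcaHeight_of_mem_children {v c₁ c₂ : V} (hc₁ : c₁ ∈ T.children v)
    (hc₂ : c₂ ∈ T.children v) (hne : c₁ ≠ c₂) {a b : X} (ha : a ∈ T.leafSet c₁)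
    (hb : b ∈ T.leafSet c₂) : T.lcaHeight t a b = t v := by
  rw [lcaHeight, (isLCA_of_mem_children hc₁ hc₂ hne ha hb).lca_eq]

theorem lcaHeight_lt_of_mem_children (ht : EquidistantProper T t) {v c : V}
    (hc : c ∈ T.children v) {a b : X} (hab : a ≠ b) (ha : a ∈ T.leafSet c)
    (hb : b ∈ T.leafSet c) : T.lcaHeight t a b < t v :=
  (ht.mono (desc_lca ha hb)).trans_lt
    (ht.lt_of_mem_children hc (interior_of_mem_leafSet hab ha hb))

theorem leafSet_lca_eq (ht : EquidistantProper T t) {a b : X} (hab : a ≠ b) :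
    T.leafSet (T.lca (T.leaf a) (T.leaf b)) = {x | T.lcaHeight t x a ≤ T.lcaHeight t a b} := by
  have hva := T.desc_lca_left (T.leaf a) (T.leaf b)
  ext x
  refine ⟨fun hx => ht.mono (desc_lca hx hva), fun hle => ?_⟩
  by_contra hx
  have hza := T.desc_lca_right (T.leaf x) (T.leaf a)
  have hzv := (desc_total hza hva).resolve_right fun h => hx (desc_trans h (T.desc_lca_left _ _))
  have hne : T.lca (T.leaf x) (T.leaf a) ≠ T.lca (T.leaf a) (T.leaf b) :=
    fun h => hx (h ▸ T.desc_lca_left _ _)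
  have hroot : T.lca (T.leaf a) (T.leaf b) ≠ T.root := fun h => hx (h ▸ T.desc_root _)
  have hint := interior_of_mem_leafSet hab hva (T.desc_lca_right (T.leaf a) (T.leaf b))
  exact absurd hle (not_le.mpr
    ((ht.2.2 _ hroot hint).trans_le (ht.mono (desc_parent_of_ne hzv hne))))

end Heights

def CordHeightsAgree (L : Set (Set X)) (T : XTree X V) (t : V → ℝ) (T' : XTree X V')
    (t' : V' → ℝ) : Prop :=
  ∀ a b : X, a ≠ b → ({a, b} : Set X) ∈ L →
    ∀ (v : V) (v' : V'), T.IsLCA v {T.leaf a, T.leaf b} →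
      T'.IsLCA v' {T'.leaf a, T'.leaf b} → t v = t' v'

theorem CordHeightsAgree.lcaHeight_eq (h : CordHeightsAgree L T t T' t')
    {a b : X} (hab : a ≠ b) (hL : ({a, b} : Set X) ∈ L) :
    T.lcaHeight t a b = T'.lcaHeight t' a b :=
  h a b hab hL _ _ (isLCA_lca _ _) (isLCA_lca _ _)

theorem IsTopoLasso.lcaHeight_eq [Finite V] (hL : T.IsTopoLasso L)
    (ht : EquidistantProper T t) (ht' : EquidistantProper T' t')
    (hagree : CordHeightsAgree L T t T' t') (a b : X) :
    T.lcaHeight t a b = T'.lcaHeight t' a b := by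
  suffices h : ∀ v, ∀ a ∈ T.leafSet v, ∀ b ∈ T.leafSet v, a ≠ b →
      T.lcaHeight t a b = T'.lcaHeight t' a b by
    by_cases hab : a = b
    · rw [hab, lcaHeight_self ht, lcaHeight_self ht']
    · exact h T.root a (T.desc_root _) b (T.desc_root _) hab
  intro v
  induction v using T.children_induction with
  | h v ih =>
  intro a ha b hb hab
  have hint := interior_of_mem_leafSet hab ha hb
  obtain ⟨c₁, hc₁, ha₁⟩ := exists_mem_children_desc ha fun h => hint ⟨a, h⟩
  obtain ⟨c₂, hc₂, hb₂⟩ := exists_mem_children_desc hb fun h => hint ⟨b, h⟩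
  by_cases h12 : c₁ = c₂
  · subst h12
    exact ih c₁ hc₁ a ha₁ b hb₂ hab
  obtain ⟨a₀, b₀, ha₀, hb₀, hcord⟩ := hL v c₁ c₂ hc₁ hc₂ h12
  have hv₀ : T'.lcaHeight t' a₀ b₀ = t v := by
    rw [← hagree.lcaHeight_eq (ne_of_mem_leafSet_children hc₁ hc₂ h12 ha₀ hb₀) hcord,
      lcaHeight_of_mem_children hc₁ hc₂ h12 ha₀ hb₀]
  have near : ∀ c ∈ T.children v, ∀ p ∈ T.leafSet c, ∀ q ∈ T.leafSet c,
      p = q ∨ T'.lcaHeight t' p q < T'.lcaHeight t' a₀ b₀ := by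
    intro c hc p hp q hq
    refine or_iff_not_imp_left.mpr fun hpq => ?_
    rw [hv₀, ← ih c hc p hp q hq hpq]
    exact lcaHeight_lt_of_mem_children ht hc hpq hp hq
  rw [lcaHeight_of_mem_children hc₁ hc₂ h12 ha₁ hb₂, ← hv₀]
  exact (ultrametric_eq_of_near lcaHeight_comm (lcaHeight_le_max ht')
    (near c₁ hc₁ a ha₁ a₀ ha₀) (near c₂ hc₂ b hb₂ b₀ hb₀)).symm

theorem exists_leafSet_eq_of_lcaHeight_eq [Finite V] (hph : T.IsPhylo)
    (ht : EquidistantProper T t) (ht' : EquidistantProper T' t')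
    (h : ∀ a b, T.lcaHeight t a b = T'.lcaHeight t' a b) (v : V) :
    ∃ v', T'.leafSet v' = T.leafSet v := by
  by_cases hv : T.IsLeaf v
  · obtain ⟨x, rfl⟩ := hv
    exact ⟨T'.leaf x, by rw [leafSet_leaf, leafSet_leaf]⟩
  obtain ⟨c₁, hc₁, c₂, hc₂, hne⟩ := hph.exists_two_children hv
  obtain ⟨a, ha⟩ := T.leafSet_nonempty c₁
  obtain ⟨b, hb⟩ := T.leafSet_nonempty c₂
  have hab := ne_of_mem_leafSet_children hc₁ hc₂ hne ha hb
  refine ⟨T'.lca (T'.leaf a) (T'.leaf b), ?_⟩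
  rw [leafSet_lca_eq ht' hab, ← (isLCA_of_mem_children hc₁ hc₂ hne ha hb).lca_eq,
    leafSet_lca_eq ht hab]
  simp only [h]

theorem treeEquiv_of_desc_iff (φ : V ≃ V') (hφ : ∀ u w, T.Desc u w ↔ T'.Desc (φ u) (φ w))
    (hleaf : ∀ x, φ (T.leaf x) = T'.leaf x) : TreeEquiv T T' := by
  have hroot : φ T.root = T'.root :=
    eq_root_of_desc (by simpa using (hφ T.root (φ.symm T'.root)).mp (T.desc_root _))
  refine ⟨φ, hroot, fun v => ?_, hleaf⟩
  by_cases hv : v = T.root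
  · rw [hv, T.parent_root, hroot, T'.parent_root]
  have hv' : φ v ≠ T'.root := fun h => hv (φ.injective (h.trans hroot.symm))
  apply desc_antisymm
  · exact desc_parent_of_ne ((hφ _ _).mp (T.desc_parent v)) (φ.injective.ne (parent_ne_self hv))
  · have hq := (hφ (φ.symm (T'.parent (φ v))) v).mpr (by simpa using T'.desc_parent (φ v))
    have hqv : φ.symm (T'.parent (φ v)) ≠ v := fun h =>
      parent_ne_self hv' (by rw [← φ.apply_symm_apply (T'.parent (φ v)), h])
    simpa using (hφ _ _).mp (desc_parent_of_ne hq hqv)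

theorem treeEquiv_of_forall_exists_leafSet_eq [Finite V] [Finite V'] (hph : T.IsPhylo)
    (hph' : T'.IsPhylo) (h : ∀ v, ∃ v', T'.leafSet v' = T.leafSet v)
    (h' : ∀ v', ∃ v, T.leafSet v = T'.leafSet v') : TreeEquiv T T' := by
  choose f hf using h
  have hbij : Function.Bijective f := by
    refine ⟨fun u w huw => hph.leafSet_injective (by rw [← hf, ← hf, huw]), fun v' => ?_⟩
    obtain ⟨v, hv⟩ := h' v'
    exact ⟨v, hph'.leafSet_injective ((hf v).trans hv)⟩
  refine treeEquiv_of_desc_iff (Equiv.ofBijective f hbij) (fun u w => ?_)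
    (fun x => hph'.leafSet_injective ?_)
  · simp only [Equiv.ofBijective_apply, hph.desc_iff_leafSet_subset,
      hph'.desc_iff_leafSet_subset, hf]
  · rw [Equiv.ofBijective_apply, hf, leafSet_leaf, leafSet_leaf]

theorem IsTopoLasso.treeEquiv [Finite V] [Finite V'] (hL : T.IsTopoLasso L)
    (hph : T.IsPhylo) (hph' : T'.IsPhylo) (ht : EquidistantProper T t)
    (ht' : EquidistantProper T' t') (hagree : CordHeightsAgree L T t T' t') : TreeEquiv T T' :=
  have h := hL.lcaHeight_eq ht ht' hagree
  treeEquiv_of_forall_exists_leafSet_eq hph hph'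
    (exists_leafSet_eq_of_lcaHeight_eq hph ht ht' h)
    (exists_leafSet_eq_of_lcaHeight_eq hph' ht' ht fun a b => (h a b).symm)

section Contract

variable (T) {u : V} (hu : u ≠ T.root)

noncomputable def contractMap : V → {w : V // w ≠ u} := fun w =>
  if h : w = u then ⟨T.parent u, parent_ne_self hu⟩ else ⟨w, h⟩

variable {T}

theorem contractMap_of_ne {w : V} (hw : w ≠ u) : T.contractMap hu w = ⟨w, hw⟩ := dif_neg hw

theorem contractMap_self : (T.contractMap hu u).1 = T.parent u := by
  simp [contractMap]

theorem contractMap_val (w : {w : V // w ≠ u}) : T.contractMap hu w.1 = w :=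
  contractMap_of_ne hu w.2

theorem desc_contractMap (w : V) : T.Desc (T.contractMap hu w).1 w := by
  by_cases h : w = u
  · subst h
    rw [contractMap_self]
    exact T.desc_parent w
  · rw [contractMap_of_ne hu h]
    exact T.desc_refl w

theorem exists_iterate_contractMap (w : V) :
    ∃ n, (fun w' : {w // w ≠ u} => T.contractMap hu (T.parent w'.1))^[n] (T.contractMap hu w) =
      T.contractMap hu (T.parent w) := by
  by_cases h : w = u
  · subst h
    refine ⟨0, ?_⟩
    rw [Function.iterate_zero_apply, contractMap_of_ne hu (parent_ne_self hu)]
    exact Subtype.ext (contractMap_self hu)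
  · exact ⟨1, by rw [Function.iterate_one, contractMap_of_ne hu h]⟩

theorem contract_childless_iff (hint : T.Interior u) (w : {w : V // w ≠ u}) :
    (∀ d : {w : V // w ≠ u}, T.contractMap hu (T.parent d.1) = w → d = w) ↔
      ∀ d, T.parent d = w.1 → d = w.1 := by
  obtain ⟨w, hwu⟩ := w
  constructor
  · intro h d hd
    by_cases hdu : d = u
    · rw [hdu] at hd
      obtain ⟨e, he⟩ := interior_iff_exists_mem_children.mp hint
      have hew : e = w := congrArg Subtype.val
        (h ⟨e, he.2⟩ (by rw [he.1]; exact Subtype.ext ((contractMap_self hu).trans hd)))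
      refine absurd ?_ (not_desc_of_mem_children he)
      rw [hew, show w = T.parent u from hd.symm]
      exact T.desc_parent u
    · exact congrArg Subtype.val
        (h ⟨d, hdu⟩ (by rw [hd, contractMap_of_ne hu hwu]))
  · rintro h ⟨d, hdu⟩ hd
    by_cases hpd : T.parent d = u
    · rw [hpd] at hd
      have hw : T.parent u = w := (contractMap_self hu).symm.trans (congrArg Subtype.val hd)
      exact absurd (h u hw) (Ne.symm hwu)
    · rw [contractMap_of_ne hu hpd] at hd
      exact Subtype.ext (h d (congrArg Subtype.val hd))

/-- Contraction of the edge above `u`: `u` is deleted and its children are reattached to its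
parent. -/
noncomputable def contract (hint : T.Interior u) : XTree X {w : V // w ≠ u} where
  root := ⟨T.root, hu.symm⟩
  parent w := T.contractMap hu (T.parent w.1)
  parent_root := by rw [T.parent_root, contractMap_of_ne hu hu.symm]
  reaches w := by
    have h := exists_iterate_map (T.contractMap hu) (exists_iterate_contractMap hu) (T.reaches w.1)
    rwa [contractMap_val, contractMap_of_ne hu hu.symm] at h
  leaf x := ⟨T.leaf x, fun h => hint ⟨x, h⟩⟩
  leaf_inj _ _ h := T.leaf_inj (congrArg Subtype.val h)
  leaf_iff w := by
    rw [contract_childless_iff hu hint, T.leaf_iff]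
    exact ⟨fun ⟨x, hx⟩ => ⟨x, Subtype.ext hx⟩, fun ⟨x, hx⟩ => ⟨x, congrArg Subtype.val hx⟩⟩

variable (hint : T.Interior u)

theorem contractMap_leaf (x : X) : T.contractMap hu (T.leaf x) = (T.contract hu hint).leaf x :=
  contractMap_of_ne hu _

theorem desc_contract {v w : V} (h : T.Desc v w) :
    (T.contract hu hint).Desc (T.contractMap hu v) (T.contractMap hu w) :=
  h.map _ (exists_iterate_contractMap hu)

theorem desc_of_desc_contract {v w : {w : V // w ≠ u}} (h : (T.contract hu hint).Desc v w) :
    T.Desc v.1 w.1 :=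
  h.map Subtype.val fun w => desc_trans (desc_contractMap hu _) (T.desc_parent w.1)

theorem isLeaf_contract_iff (w : {w : V // w ≠ u}) :
    (T.contract hu hint).IsLeaf w ↔ T.IsLeaf w.1 :=
  ⟨fun ⟨x, hx⟩ => ⟨x, congrArg Subtype.val hx⟩, fun ⟨x, hx⟩ => ⟨x, Subtype.ext hx⟩⟩

theorem isLCA_contract {w : V} {a b : X} (h : T.IsLCA w {T.leaf a, T.leaf b}) :
    (T.contract hu hint).IsLCA (T.contractMap hu w)
      {(T.contract hu hint).leaf a, (T.contract hu hint).leaf b} := by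
  refine ⟨?_, fun z hz => ?_⟩
  · rintro y (rfl | rfl) <;> rw [← contractMap_leaf hu hint]
    exacts [desc_contract hu hint (h.1 _ (Or.inl rfl)), desc_contract hu hint (h.1 _ (Or.inr rfl))]
  · have hzw := h.2 z.1 (by
      rintro y (rfl | rfl)
      exacts [desc_of_desc_contract hu hint (hz _ (Or.inl rfl)),
        desc_of_desc_contract hu hint (hz _ (Or.inr rfl))])
    rw [← contractMap_val hu z]
    exact desc_contract hu hint hzw

theorem IsPhylo.contract [Finite V] (hph : T.IsPhylo) : (T.contract hu hint).IsPhylo := by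
  have key : ∀ w : {w // w ≠ u}, T.Interior w.1 →
      2 ≤ ((T.contract hu hint).children w).ncard := by
    rintro ⟨w, hwu⟩ hw
    by_cases hwp : w = T.parent u
    · obtain ⟨d₁, h₁, d₂, h₂, hne⟩ := hph.exists_two_children hint
      have hmem : ∀ d (hd : d ∈ T.children u),
          (⟨d, hd.2⟩ : {w // w ≠ u}) ∈ (T.contract hu hint).children ⟨w, hwu⟩ := by
        refine fun d hd => ⟨Subtype.ext ?_, fun h => ?_⟩
        · show (T.contractMap hu (T.parent d)).1 = w
          rw [hd.1, contractMap_self, hwp]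
        · refine not_desc_of_mem_children hd ?_
          rw [show d = w from congrArg Subtype.val h, hwp]
          exact T.desc_parent u
      exact two_le_ncard_children_of_mem (hmem d₁ h₁) (hmem d₂ h₂)
        fun h => hne (congrArg Subtype.val h)
    · obtain ⟨d₁, h₁, d₂, h₂, hne⟩ := hph.exists_two_children hw
      have hdu : ∀ d ∈ T.children w, d ≠ u := fun d hd hdu => hwp (hdu ▸ hd.1).symm
      have hmem : ∀ d (hd : d ∈ T.children w),
          (⟨d, hdu d hd⟩ : {w // w ≠ u}) ∈ (T.contract hu hint).children ⟨w, hwu⟩ :=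
        fun d hd => ⟨by show T.contractMap hu _ = _; rw [hd.1, contractMap_of_ne hu hwu],
          fun h => hd.2 (congrArg Subtype.val h)⟩
      exact two_le_ncard_children_of_mem (hmem d₁ h₁) (hmem d₂ h₂)
        fun h => hne (congrArg Subtype.val h)
  exact ⟨key _ hph.interior_root,
    fun w _ hw => key w ((isLeaf_contract_iff hu hint w).not.mp hw)⟩

theorem _root_.EquidistantProper.contract (ht : EquidistantProper T t) :
    EquidistantProper (T.contract hu hint) (fun w => t w.1) := by
  refine ⟨fun x => ht.1 x, fun w => (ht.2.1 w.1).trans (ht.mono (desc_contractMap hu _)),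
    fun w hw hwi => ?_⟩
  have hw' : w.1 ≠ T.root := fun h => hw (Subtype.ext h)
  exact (ht.2.2 w.1 hw' ((isLeaf_contract_iff hu hint w).not.mp hwi)).trans_le
    (ht.mono (desc_contractMap hu _))

/-- Raising the root by one gives the contracted edge positive length. -/
theorem _root_.EquidistantProper.of_contract (hpu : T.parent u = T.root)
    {t' : {w // w ≠ u} → ℝ} (ht' : EquidistantProper (T.contract hu hint) t') :
    EquidistantProper T (fun w => t' (T.contractMap hu w) + if w = T.root then 1 else 0) := by
  have hroot : T.Interior T.root :=
    interior_iff_exists_mem_children.mpr ⟨u, hpu ▸ mem_children_parent hu⟩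
  have hmono : ∀ w, t' (T.contractMap hu w) ≤ t' (T.contractMap hu (T.parent w)) :=
    fun w => ht'.mono (desc_contract hu hint (T.desc_parent w))
  refine ⟨fun x => ?_, fun w => ?_, fun w hw hwi => ?_⟩ <;> dsimp only
  · rw [contractMap_leaf hu hint, ht'.1, if_neg fun h => hroot ⟨x, h⟩, add_zero]
  · by_cases hw : w = T.root
    · rw [hw, T.parent_root]
    · have := hmono w
      split_ifs <;> linarith
  · by_cases hpw : T.parent w = T.root
    · have := hmono w
      rw [hpw] at this
      rw [if_neg hw, hpw, if_pos rfl]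
      linarith
    · have hwu : w ≠ u := fun h => hpw (h ▸ hpu)
      simp only [if_neg hw, if_neg hpw, add_zero]
      rw [contractMap_of_ne hu hwu]
      exact ht'.2.2 ⟨w, hwu⟩ (fun h => hw (congrArg Subtype.val h))
        ((isLeaf_contract_iff hu hint _).not.mpr hwi)

theorem cordHeightsAgree_contract {t' : {w // w ≠ u} → ℝ}
    (h : ∀ a b w, a ≠ b → ({a, b} : Set X) ∈ L → T.IsLCA w {T.leaf a, T.leaf b} →
      t w = t' (T.contractMap hu w)) :
    CordHeightsAgree L T t (T.contract hu hint) t' := fun a b hab hL w _ hw hw' =>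
  (h a b w hab hL hw).trans (congrArg t' ((isLCA_contract hu hint hw).unique hw'))

theorem not_treeEquiv_contract [Finite V] : ¬ TreeEquiv T (T.contract hu hint) := by
  rintro ⟨φ, -⟩
  obtain ⟨w, hw⟩ :=
    Finite.injective_iff_surjective.mp (Subtype.val_injective.comp φ.injective) u
  exact (φ w).2 hw

end Contract

section InsertParent

variable (T) (v : V) (S : Set V)

noncomputable def insertParentFun : Option V → Option V
  | none => some v
  | some w => if w ∈ S then none else some (T.parent w)

variable {T v S}

theorem exists_iterate_insertParentFun (hS : S ⊆ T.children v) (w : V) :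
    ∃ n, (T.insertParentFun v S)^[n] (some w) = some (T.parent w) := by
  by_cases h : w ∈ S
  · exact ⟨2, by simp [insertParentFun, h, (hS h).1]⟩
  · exact ⟨1, by simp [insertParentFun, h]⟩

theorem insertParent_childless_iff (hS : S ⊆ T.children v) (hSne : S.Nonempty) (w : V) :
    (∀ o, T.insertParentFun v S o = some w → o = some w) ↔ ∀ d, T.parent d = w → d = w := by
  constructor
  · intro h d hd
    by_cases hdS : d ∈ S
    · have hvw : v = w := (hS hdS).1.symm.trans hd
      exact absurd (h none (by simp [insertParentFun, hvw])) (by simp)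
    · exact Option.some_injective _ (h (some d) (by simp [insertParentFun, hdS, hd]))
  · intro h o ho
    cases o with
    | none =>
      obtain ⟨c, hc⟩ := hSne
      have hvw : v = w := Option.some_injective _ ho
      exact absurd (h c ((hS hc).1.trans hvw)) fun hcw => (hS hc).2 (hcw.trans hvw.symm)
    | some d =>
      by_cases hdS : d ∈ S
      · simp [insertParentFun, hdS] at ho
      · simp only [insertParentFun, hdS, if_false, Option.some_inj] at ho
        rw [h d ho]

/-- The tree obtained by inserting a new vertex `none` between `v` and its children in `S`. -/
noncomputable def insertParent (hS : S ⊆ T.children v) (hSne : S.Nonempty) :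
    XTree X (Option V) where
  root := some T.root
  parent := T.insertParentFun v S
  parent_root := by
    have hroot : T.root ∉ S := fun h => ne_root_of_mem_children (hS h) rfl
    simp [insertParentFun, hroot, T.parent_root]
  reaches o := by
    cases o with
    | none =>
      obtain ⟨m, hm⟩ := exists_iterate_map some (exists_iterate_insertParentFun hS) (T.reaches v)
      exact ⟨m + 1, by rw [Function.iterate_succ_apply]; exact hm⟩
    | some w => exact exists_iterate_map some (exists_iterate_insertParentFun hS) (T.reaches w)
  leaf x := some (T.leaf x)
  leaf_inj _ _ h := T.leaf_inj (Option.some_injective _ h)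
  leaf_iff o := by
    cases o with
    | none =>
      obtain ⟨c, hc⟩ := hSne
      refine iff_of_false (fun h => ?_) (by rintro ⟨x, hx⟩; simp at hx)
      exact absurd (h (some c) (by simp [insertParentFun, hc])) (by simp)
    | some w =>
      rw [insertParent_childless_iff hS hSne, T.leaf_iff]
      exact ⟨fun ⟨x, hx⟩ => ⟨x, congrArg some hx⟩, fun ⟨x, hx⟩ => ⟨x, Option.some_injective _ hx⟩⟩

variable (hS : S ⊆ T.children v) (hSne : S.Nonempty)

theorem insertParent_parent_none : (T.insertParent hS hSne).parent none = some v := rfl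

theorem insertParent_parent_some_of_mem {w : V} (hw : w ∈ S) :
    (T.insertParent hS hSne).parent (some w) = none := if_pos hw

theorem insertParent_parent_some_of_notMem {w : V} (hw : w ∉ S) :
    (T.insertParent hS hSne).parent (some w) = some (T.parent w) := if_neg hw

theorem desc_insertParent_some {u w : V} (h : T.Desc u w) :
    (T.insertParent hS hSne).Desc (some u) (some w) :=
  h.map some (exists_iterate_insertParentFun hS)

theorem desc_of_desc_insertParent_some {u w : V}
    (h : (T.insertParent hS hSne).Desc (some u) (some w)) : T.Desc u w := by
  refine h.map (fun o => o.elim v id) fun o => ?_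
  cases o with
  | none => exact T.desc_refl v
  | some w =>
    by_cases hw : w ∈ S
    · rw [insertParent_parent_some_of_mem hS hSne hw, Option.elim_none, ← (hS hw).1]
      exact T.desc_parent w
    · rw [insertParent_parent_some_of_notMem hS hSne hw]
      exact T.desc_parent w

theorem desc_insertParent_none_iff {w : V} :
    (T.insertParent hS hSne).Desc none (some w) ↔ ∃ c ∈ S, T.Desc c w := by
  constructor
  · intro h
    obtain ⟨o, ho, how⟩ := exists_mem_children_desc h (Option.some_ne_none w)
    cases o with
    | none => exact absurd rfl ho.2
    | some c =>
      refine ⟨c, by_contra fun hc => ?_, desc_of_desc_insertParent_some hS hSne how⟩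
      have := ho.1
      rw [insertParent_parent_some_of_notMem hS hSne hc] at this
      exact Option.some_ne_none _ this
  · rintro ⟨c, hc, hcw⟩
    have hc' : (T.insertParent hS hSne).Desc none (some c) :=
      ⟨1, insertParent_parent_some_of_mem hS hSne hc⟩
    exact desc_trans hc' (desc_insertParent_some hS hSne hcw)

theorem leafSet_insertParent_some (w : V) :
    (T.insertParent hS hSne).leafSet (some w) = T.leafSet w :=
  Set.ext fun _ => ⟨desc_of_desc_insertParent_some hS hSne, desc_insertParent_some hS hSne⟩

theorem isLeaf_insertParent_some_iff (w : V) :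
    (T.insertParent hS hSne).IsLeaf (some w) ↔ T.IsLeaf w :=
  ⟨fun ⟨x, hx⟩ => ⟨x, Option.some_injective _ hx⟩, fun ⟨x, hx⟩ => ⟨x, congrArg some hx⟩⟩

theorem isLCA_insertParent {w : V} {a b : X} (h : T.IsLCA w {T.leaf a, T.leaf b})
    (hsep : ∀ c₁ ∈ S, ∀ c₂ ∈ S, a ∈ T.leafSet c₁ → b ∈ T.leafSet c₂ → c₁ = c₂) :
    (T.insertParent hS hSne).IsLCA (some w)
      {(T.insertParent hS hSne).leaf a, (T.insertParent hS hSne).leaf b} := by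
  refine ⟨?_, fun z hz => ?_⟩
  · rintro y (rfl | rfl)
    exacts [desc_insertParent_some hS hSne (h.1 _ (Or.inl rfl)),
      desc_insertParent_some hS hSne (h.1 _ (Or.inr rfl))]
  have hza := hz _ (Or.inl rfl)
  have hzb := hz _ (Or.inr rfl)
  cases z with
  | none =>
    obtain ⟨c₁, hc₁, ha⟩ := (desc_insertParent_none_iff hS hSne).mp hza
    obtain ⟨c₂, hc₂, hb⟩ := (desc_insertParent_none_iff hS hSne).mp hzb
    obtain rfl := hsep c₁ hc₁ c₂ hc₂ ha hb
    exact (desc_insertParent_none_iff hS hSne).mpr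
      ⟨c₁, hc₁, h.2 c₁ (by rintro y (rfl | rfl); exacts [ha, hb])⟩
  | some z =>
    refine desc_insertParent_some hS hSne (h.2 z ?_)
    rintro y (rfl | rfl)
    exacts [desc_of_desc_insertParent_some hS hSne hza,
      desc_of_desc_insertParent_some hS hSne hzb]

theorem IsPhylo.insertParent [Finite V] (hph : T.IsPhylo) (h₂ : ∃ c₁ ∈ S, ∃ c₂ ∈ S, c₁ ≠ c₂)
    (h₃ : ∃ c ∈ T.children v, c ∉ S) : (T.insertParent hS hSne).IsPhylo := by
  have hsome : ∀ w, T.Interior w → 2 ≤ ((T.insertParent hS hSne).children (some w)).ncard := by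
    intro w hw
    by_cases hwv : w = v
    · obtain ⟨c, hc, hcS⟩ := h₃
      refine two_le_ncard_children_of_mem (v := some w) (c₁ := none) (c₂ := some c)
        ⟨?_, by simp⟩ ⟨?_, by simpa [hwv] using hc.2⟩ (by simp)
      · rw [insertParent_parent_none, hwv]
      · rw [insertParent_parent_some_of_notMem hS hSne hcS, hc.1, hwv]
    · obtain ⟨d₁, hd₁, d₂, hd₂, hne⟩ := hph.exists_two_children hw
      have hmem : ∀ d ∈ T.children w, some d ∈ (T.insertParent hS hSne).children (some w) :=
        fun d hd => ⟨by rw [insertParent_parent_some_of_notMem hS hSne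
          fun h => hwv (hd.1.symm.trans (hS h).1), hd.1], by simpa using hd.2⟩
      exact two_le_ncard_children_of_mem (hmem d₁ hd₁) (hmem d₂ hd₂) (by simpa using hne)
  refine ⟨hsome _ hph.interior_root, fun o _ ho => ?_⟩
  cases o with
  | none =>
    obtain ⟨c₁, hc₁, c₂, hc₂, hne⟩ := h₂
    exact two_le_ncard_children_of_mem (v := none) (c₁ := some c₁) (c₂ := some c₂)
      ⟨insertParent_parent_some_of_mem hS hSne hc₁, by simp⟩
      ⟨insertParent_parent_some_of_mem hS hSne hc₂, by simp⟩ (by simpa using hne)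
  | some w => exact hsome w ((isLeaf_insertParent_some_iff hS hSne w).not.mp ho)

theorem cordHeightsAgree_insertParent {t' : Option V → ℝ}
    (ht : ∀ w, t' (some w) = t w)
    (hsep : ∀ a b, ({a, b} : Set X) ∈ L →
      ∀ c₁ ∈ S, ∀ c₂ ∈ S, a ∈ T.leafSet c₁ → b ∈ T.leafSet c₂ → c₁ = c₂) :
    CordHeightsAgree L T t (T.insertParent hS hSne) t' := fun a b _ hL w _ hw hw' =>
  ((ht w).symm.trans (congrArg t' ((isLCA_insertParent hS hSne hw (hsep a b hL)).unique hw')))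

theorem not_treeEquiv_insertParent [Finite V] : ¬ TreeEquiv T (T.insertParent hS hSne) := by
  rintro ⟨φ, -⟩
  have := (Nat.card_congr φ).trans Finite.card_option
  omega

end InsertParent

theorem IsPhylo.equidistantProper_ncard [Finite X] [Finite V] (hph : T.IsPhylo) :
    EquidistantProper T (fun v => ((T.leafSet v).ncard : ℝ) - 1) := by
  refine ⟨fun x => by simp [leafSet_leaf], fun v => ?_, fun v hv _ => ?_⟩ <;> dsimp only
  · have := Set.ncard_le_ncard (leafSet_mono (T.desc_parent v)) (Set.toFinite _)
    gcongr
  · have := Set.ncard_lt_ncard (hph.leafSet_ssubset_parent hv) (Set.toFinite _)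
    gcongr

/-- The paper's definition of a topological lasso. -/
def IsDeterminedByCords (T : XTree X V) (L : Set (Set X)) : Prop :=
  ∀ (V' : Type) [Fintype V'] (T' : XTree X V'), T'.IsPhylo →
    ∀ (t : V → ℝ) (t' : V' → ℝ), EquidistantProper T t → EquidistantProper T' t' →
      CordHeightsAgree L T t T' t' → TreeEquiv T T'

def NoCordBetween (L : Set (Set X)) (T : XTree X V) (c₁ c₂ : V) : Prop :=
  ∀ a ∈ T.leafSet c₁, ∀ b ∈ T.leafSet c₂, ({a, b} : Set X) ∉ L

theorem NoCordBetween.symm {c₁ c₂ : V} (h : NoCordBetween L T c₁ c₂) :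
    NoCordBetween L T c₂ c₁ :=
  fun a ha b hb hab => h b hb a ha (Set.pair_comm a b ▸ hab)

theorem NoCordBetween.ne_of_isLCA {v c₁ c₂ : V} (hno : NoCordBetween L T c₁ c₂)
    (hch : T.children v = {c₁, c₂}) {a b : X} (hab : a ≠ b) (hL : ({a, b} : Set X) ∈ L)
    {w : V} (hw : T.IsLCA w {T.leaf a, T.leaf b}) : w ≠ v := by
  rintro rfl
  obtain ⟨d₁, hd₁, d₂, hd₂, hne, ha, hb⟩ := exists_mem_children_of_isLCA hab hw
  rw [hch] at hd₁ hd₂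
  rcases hd₁ with rfl | rfl <;> rcases hd₂ with rfl | rfl
  · exact hne rfl
  · exact hno a ha b hb hL
  · exact hno.symm a ha b hb hL
  · exact hne rfl

theorem not_isDeterminedByCords_of_three_children [Finite X] [Fintype V] (hph : T.IsPhylo)
    {v c₁ c₂ c₃ : V} (hc₁ : c₁ ∈ T.children v) (hc₂ : c₂ ∈ T.children v)
    (hc₃ : c₃ ∈ T.children v) (h12 : c₁ ≠ c₂) (h31 : c₃ ≠ c₁) (h32 : c₃ ≠ c₂)
    (hno : NoCordBetween L T c₁ c₂) : ¬ T.IsDeterminedByCords L := by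
  intro hdet
  have hS : ({c₁, c₂} : Set V) ⊆ T.children v := by
    rintro c (rfl | rfl)
    exacts [hc₁, hc₂]
  have hSne : ({c₁, c₂} : Set V).Nonempty := Set.insert_nonempty _ _
  have hph' := hph.insertParent hS hSne ⟨c₁, Or.inl rfl, c₂, Or.inr rfl, h12⟩
    ⟨c₃, hc₃, by rintro (h | h); exacts [h31 h, h32 h]⟩
  refine not_treeEquiv_insertParent hS hSne (hdet _ _ hph' _ _ hph.equidistantProper_ncard
    hph'.equidistantProper_ncard ?_)
  refine cordHeightsAgree_insertParent hS hSne
    (fun w => by simp only [leafSet_insertParent_some]) fun a b hL d₁ hd₁ d₂ hd₂ ha hb => ?_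
  rcases hd₁ with rfl | rfl <;> rcases hd₂ with rfl | rfl
  · rfl
  · exact absurd hL (hno a ha b hb)
  · exact absurd hL (hno.symm a ha b hb)
  · rfl

theorem not_isDeterminedByCords_of_children_eq_pair [Finite X] [Fintype V] (hph : T.IsPhylo)
    {v c₁ c₂ : V} (hv : v ≠ T.root) (hch : T.children v = {c₁, c₂})
    (hno : NoCordBetween L T c₁ c₂) : ¬ T.IsDeterminedByCords L := by
  intro hdet
  have hint : T.Interior v := interior_iff_exists_mem_children.mpr ⟨c₁, hch ▸ Or.inl rfl⟩
  have ht := hph.equidistantProper_ncard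
  refine not_treeEquiv_contract hv hint
    (hdet _ _ (hph.contract hv hint) _ _ ht (ht.contract hv hint) ?_)
  exact cordHeightsAgree_contract hv hint fun a b w hab hL hw => by
    rw [contractMap_of_ne hv (hno.ne_of_isLCA hch hab hL hw)]

theorem not_isDeterminedByCords_of_children_root_eq_pair [Finite X] [Fintype V]
    (hph : T.IsPhylo) {c₁ c₂ : V} (hch : T.children T.root = {c₁, c₂}) (hint : T.Interior c₁)
    (hno : NoCordBetween L T c₁ c₂) : ¬ T.IsDeterminedByCords L := by
  intro hdet
  have hc₁ : c₁ ∈ T.children T.root := hch ▸ Or.inl rfl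
  have hu := ne_root_of_mem_children hc₁
  have hph' := hph.contract hu hint
  have ht' := hph'.equidistantProper_ncard
  refine not_treeEquiv_contract hu hint
    (hdet _ _ hph' _ _ (ht'.of_contract hu hint hc₁.1) ht' ?_)
  exact cordHeightsAgree_contract hu hint fun a b w hab hL hw => by
    simp only [if_neg (hno.ne_of_isLCA hch hab hL hw), add_zero]

theorem exists_interior_of_children_root_eq_pair [Fintype X] (hX : 3 ≤ Fintype.card X)
    {c₁ c₂ : V} (hch : T.children T.root = {c₁, c₂}) : T.Interior c₁ ∨ T.Interior c₂ := by
  rw [or_iff_not_and_not]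
  rintro ⟨h₁, h₂⟩
  obtain ⟨x₁, rfl⟩ := not_not.mp h₁
  obtain ⟨x₂, rfl⟩ := not_not.mp h₂
  have hroot : T.Interior T.root :=
    interior_iff_exists_mem_children.mpr ⟨T.leaf x₁, hch ▸ Or.inl rfl⟩
  have hsub : (Finset.univ : Finset X) ⊆ {x₁, x₂} := fun x _ => by
    obtain ⟨c, hc, hcx⟩ :=
      exists_mem_children_desc (T.desc_root (T.leaf x)) fun h => hroot ⟨x, h⟩
    rw [hch] at hc
    rcases hc with rfl | rfl
    · simp [T.leaf_inj (eq_of_isLeaf_of_desc ⟨x₁, rfl⟩ hcx)]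
    · simp [T.leaf_inj (eq_of_isLeaf_of_desc ⟨x₂, rfl⟩ hcx)]
  have := (Finset.card_le_card hsub).trans Finset.card_le_two
  rw [Finset.card_univ] at this
  omega

theorem not_isDeterminedByCords_of_noCordBetween [Fintype X] [Fintype V] (hph : T.IsPhylo)
    (hX : 3 ≤ Fintype.card X) {v c₁ c₂ : V} (hc₁ : c₁ ∈ T.children v)
    (hc₂ : c₂ ∈ T.children v) (h12 : c₁ ≠ c₂) (hno : NoCordBetween L T c₁ c₂) :
    ¬ T.IsDeterminedByCords L := by
  by_cases h₃ : ∃ c₃ ∈ T.children v, c₃ ≠ c₁ ∧ c₃ ≠ c₂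
  · obtain ⟨c₃, hc₃, h31, h32⟩ := h₃
    exact not_isDeterminedByCords_of_three_children hph hc₁ hc₂ hc₃ h12 h31 h32 hno
  have hch : T.children v = {c₁, c₂} := by
    refine Set.Subset.antisymm (fun c hc => ?_) (by rintro c (rfl | rfl); exacts [hc₁, hc₂])
    by_contra h
    exact h₃ ⟨c, hc, fun h' => h (Or.inl h'), fun h' => h (Or.inr h')⟩
  by_cases hv : v = T.root
  · subst hv
    rcases exists_interior_of_children_root_eq_pair hX hch with h | h
    · exact not_isDeterminedByCords_of_children_root_eq_pair hph hch h hno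
    · exact not_isDeterminedByCords_of_children_root_eq_pair hph (Set.pair_comm c₁ c₂ ▸ hch) h
        hno.symm
  · exact not_isDeterminedByCords_of_children_eq_pair hph hv hch hno

end XTree

theorem stmt7_general {X V : Type} [Fintype X] [Fintype V] (T : XTree X V)
    (hph : T.IsPhylo) (hX : 3 ≤ Fintype.card X)
    (L : Set (Set X)) :
    (∀ (V' : Type) [Fintype V'] (T' : XTree X V'), T'.IsPhylo →
      ∀ (t : V → ℝ) (t' : V' → ℝ), EquidistantProper T t → EquidistantProper T' t' →
        (∀ a b : X, a ≠ b → ({a, b} : Set X) ∈ L →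
          ∀ (v : V) (v' : V'), T.IsLCA v {T.leaf a, T.leaf b} →
            T'.IsLCA v' {T'.leaf a, T'.leaf b} → t v = t' v') →
        TreeEquiv T T') ↔ T.IsTopoLasso L := by
  refine ⟨fun hdet => ?_, fun hL V' _ T' hph' t t' ht ht' hagree =>
    hL.treeEquiv hph hph' ht ht' hagree⟩
  by_contra hL
  simp only [XTree.IsTopoLasso, not_forall] at hL
  obtain ⟨v, c₁, c₂, hc₁, hc₂, h12, hno⟩ := hL
  exact XTree.not_isDeterminedByCords_of_noCordBetween hph hX hc₁ hc₂ h12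
    (fun a ha b hb hab => hno ⟨a, b, ha, hb, hab⟩) hdet

/-- `L` is a topological lasso for `T` (any equidistant proper realization
of the distances on the cords of `L` on another X-tree forces equivalence of the trees)
iff every child-edge graph `G(L,v)` of an interior vertex is a clique. -/
theorem stmt7 {X V : Type} [Fintype X] [Fintype V] (T : XTree X V)
    (hph : T.IsPhylo) (hX : 3 ≤ Fintype.card X)
    (L : Set (Set X)) (hc : ∀ c ∈ L, IsCord c) (hcov : ∀ x : X, ∃ c ∈ L, x ∈ c) :
    (∀ (V' : Type) [Fintype V'] (T' : XTree X V'), T'.IsPhylo →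
      ∀ (t : V → ℝ) (t' : V' → ℝ), EquidistantProper T t → EquidistantProper T' t' →
        (∀ a b : X, a ≠ b → ({a, b} : Set X) ∈ L →
          ∀ (v : V) (v' : V'), T.IsLCA v {T.leaf a, T.leaf b} →
            T'.IsLCA v' {T'.leaf a, T'.leaf b} → t v = t' v') →
        TreeEquiv T T') ↔ T.IsTopoLasso L :=
  stmt7_general T hph hX L
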